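/- Let f_ν be the density of the p-dimensional multivariate Student's t distribution with ν > 0 degrees of freedom and positive definite scale V. Then for every β ≥ 0, (1/(1+β)) ∫ f_ν(z)^{1+β} dz ≤ [Γ((ν+p)/2) / Γ(ν/2)]^β · (1/(1+β)) (πν)^{-βp/2} |V|^{-β/2}. -/

import Mathlib

/-!
The density `f` is largest at its centre `μ`, so `f ^ (1 + β) ≤ f μ ^ β * f` pointwise and
`∫ f ^ (1 + β) ≤ f μ ^ β * ∫ f = f μ ^ β`, which is the right-hand side. The total mass `∫ f = 1`
is computed by writing the quadratic form of `V⁻¹` as `‖S z‖²` with `S` the square root of `V⁻¹`,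
passing to polar coordinates, and recognising a Beta integral under `r ↦ (1 + r²)⁻¹`.
-/

open Real MeasureTheory Matrix

/-- Density of the `p`-dimensional multivariate Student's t distribution with `ν` degrees of
freedom, location `μ` and scale matrix `V`. -/
noncomputable def mvtDensity (p : ℕ) (ν : ℝ) (μ : Fin p → ℝ)
    (V : Matrix (Fin p) (Fin p) ℝ) (z : Fin p → ℝ) : ℝ :=
  Real.Gamma ((ν + p) / 2) /
      (Real.Gamma (ν / 2) * ν ^ ((p : ℝ) / 2) * π ^ ((p : ℝ) / 2) * V.det ^ ((1 : ℝ) / 2)) *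
    (1 + (1 / ν) * ((z - μ) ⬝ᵥ (V⁻¹ *ᵥ (z - μ)))) ^ (-(ν + p) / 2)

open Set Module

theorem integral_Ioo_rpow_mul_one_sub_rpow {a b : ℝ} (ha : 0 < a) (hb : 0 < b) :
    ∫ x in Ioo (0 : ℝ) 1, x ^ (a - 1) * (1 - x) ^ (b - 1) = ProbabilityTheory.beta a b := by
  rw [ProbabilityTheory.beta_eq_betaIntegralReal a b ha hb, Complex.betaIntegral,
    intervalIntegral.integral_of_le zero_le_one, integral_Ioc_eq_integral_Ioo,
    ← Complex.ofReal_re (∫ x in Ioo (0 : ℝ) 1, _), ← integral_complex_ofReal]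
  congr 1
  refine setIntegral_congr_fun measurableSet_Ioo fun x hx => ?_
  have hx1 : 0 ≤ 1 - x := by linarith [hx.2]
  push_cast
  rw [Complex.ofReal_cpow hx.1.le, Complex.ofReal_cpow hx1]
  push_cast
  ring_nf

theorem integral_Ioi_rpow_mul_one_add_sq_rpow {a b : ℝ} (ha : 0 < a) (hb : 0 < b) :
    ∫ r in Ioi (0 : ℝ), r ^ (2 * b - 1) * (1 + r ^ 2) ^ (-(a + b)) =
      ProbabilityTheory.beta a b / 2 := by
  set φ : ℝ → ℝ := fun r => (1 + r ^ 2)⁻¹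
  have hφ_image : φ '' Ioi 0 = Ioo 0 1 := by
    ext x
    constructor
    · rintro ⟨r, hr, rfl⟩
      have : (1 : ℝ) < 1 + r ^ 2 := by have := mem_Ioi.mp hr; nlinarith
      exact ⟨by positivity, inv_lt_one_of_one_lt₀ this⟩
    · rintro ⟨hx0, hx1⟩
      have hx : 0 < x⁻¹ - 1 := by linarith [one_lt_inv₀ hx0 |>.mpr hx1]
      refine ⟨√(x⁻¹ - 1), Real.sqrt_pos.mpr hx, ?_⟩
      simp [φ, Real.sq_sqrt hx.le]
  have hφ_deriv : ∀ r ∈ Ioi (0 : ℝ),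
      HasDerivWithinAt φ (-(2 * r) / (1 + r ^ 2) ^ 2) (Ioi 0) r := fun r _ =>
    (((hasDerivAt_pow 2 r).const_add 1).inv (by positivity)).hasDerivWithinAt.congr_deriv
      (by norm_num)
  have hφ_inj : InjOn φ (Ioi 0) := fun r hr s hs h => by
    have := inv_injective h
    exact (pow_left_inj₀ (le_of_lt hr) (le_of_lt hs) two_ne_zero).mp (by linarith)
  rw [eq_div_iff two_ne_zero, ← integral_Ioo_rpow_mul_one_sub_rpow ha hb, ← hφ_image,
    integral_image_eq_integral_abs_deriv_smul measurableSet_Ioi hφ_deriv hφ_inj,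
    ← integral_mul_const]
  refine setIntegral_congr_fun measurableSet_Ioi fun r (hr : 0 < r) => ?_
  have hq : 0 < 1 + r ^ 2 := by positivity
  have h1 : 1 - φ r = r ^ 2 * (1 + r ^ 2)⁻¹ := by simp only [φ]; field_simp; ring
  have hφ_pow : φ r ^ (a - 1) = (1 + r ^ 2) ^ (1 - a) := by
    rw [inv_rpow hq.le, ← rpow_neg hq.le, neg_sub]
  have h1φ_pow : (1 - φ r) ^ (b - 1) = r ^ (2 * b - 2) * (1 + r ^ 2) ^ (1 - b) := by
    rw [h1, mul_rpow (by positivity) (by positivity), inv_rpow hq.le, ← rpow_neg hq.le, neg_sub,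
      ← rpow_natCast, ← rpow_mul hr.le]
    norm_num [mul_sub]
  have hderiv_abs : |-(2 * r) / (1 + r ^ 2) ^ 2| = 2 * r * (1 + r ^ 2) ^ (-2 : ℝ) := by
    rw [abs_div, abs_neg, abs_of_pos (by positivity), abs_of_pos (by positivity), rpow_neg hq.le,
      div_eq_mul_inv]
    norm_cast
  have hr_pow : r ^ (2 * b - 1) = r * r ^ (2 * b - 2) := by
    rw [show 2 * b - 1 = 1 + (2 * b - 2) by ring, rpow_add hr, rpow_one]
  have hq_pow : (1 + r ^ 2) ^ (-(a + b)) =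
      (1 + r ^ 2) ^ (-2 : ℝ) * (1 + r ^ 2) ^ (1 - a) * (1 + r ^ 2) ^ (1 - b) := by
    rw [← rpow_add hq, ← rpow_add hq]; ring_nf
  rw [smul_eq_mul, hφ_pow, h1φ_pow, hderiv_abs, hr_pow, hq_pow]
  ring

section InnerProductSpace

variable {E : Type*} [NormedAddCommGroup E] [InnerProductSpace ℝ E] [FiniteDimensional ℝ E]
  [MeasurableSpace E] [BorelSpace E]

theorem volume_univ_of_subsingleton [Subsingleton E] : volume (univ : Set E) = 1 := by
  rw [← (stdOrthonormalBasis ℝ E).volume_parallelepiped,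
    Subsingleton.eq_univ_of_nonempty ⟨0, (mem_parallelepiped_iff _ _).2 ⟨0, by simp⟩⟩]

theorem volume_real_ball_zero_one [Nontrivial E] :
    volume.real (Metric.ball (0 : E) 1) =
      π ^ ((finrank ℝ E : ℝ) / 2) / Gamma (finrank ℝ E / 2 + 1) := by
  rw [measureReal_def, InnerProductSpace.volume_ball, ENNReal.ofReal_one, one_pow, one_mul,
    ENNReal.toReal_ofReal (by positivity), sqrt_eq_rpow, ← rpow_natCast, ← rpow_mul pi_pos.le]
  ring_nf

theorem integral_one_add_norm_sq_rpow_neg {s : ℝ} (hs : (finrank ℝ E : ℝ) / 2 < s) :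
    ∫ x : E, (1 + ‖x‖ ^ 2) ^ (-s) =
      π ^ ((finrank ℝ E : ℝ) / 2) * Gamma (s - finrank ℝ E / 2) / Gamma s := by
  have hs_pos : 0 < s := lt_of_le_of_lt (by positivity) hs
  rcases subsingleton_or_nontrivial E with hE | hE
  · have hΓs : Gamma s ≠ 0 := (Gamma_pos_of_pos hs_pos).ne'
    simp [Subsingleton.elim _ (0 : E), finrank_zero_of_subsingleton, measureReal_def,
      volume_univ_of_subsingleton, hΓs]
  have hn_pos : 0 < finrank ℝ E := finrank_pos
  have hradial : ∫ y in Ioi (0 : ℝ), y ^ (finrank ℝ E - 1) • (1 + y ^ 2) ^ (-s) =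
      ProbabilityTheory.beta (s - finrank ℝ E / 2) (finrank ℝ E / 2) / 2 := by
    rw [← integral_Ioi_rpow_mul_one_add_sq_rpow (by linarith) (by positivity)]
    refine setIntegral_congr_fun measurableSet_Ioi fun y (hy : 0 < y) => ?_
    rw [smul_eq_mul, ← rpow_natCast, Nat.cast_sub hn_pos]
    ring_nf
  rw [integral_fun_norm_addHaar volume (fun r => (1 + r ^ 2) ^ (-s)), hradial,
    volume_real_ball_zero_one, ProbabilityTheory.beta, Gamma_add_one (by positivity),
    sub_add_cancel, nsmul_eq_mul, smul_eq_mul]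
  have : Gamma (finrank ℝ E / 2) ≠ 0 := (Gamma_pos_of_pos (by positivity)).ne'
  field_simp

theorem integral_one_add_norm_sq_div_rpow_neg {c s : ℝ} (hc : 0 < c)
    (hs : (finrank ℝ E : ℝ) / 2 < s) :
    ∫ x : E, (1 + ‖x‖ ^ 2 / c) ^ (-s) =
      (π * c) ^ ((finrank ℝ E : ℝ) / 2) * Gamma (s - finrank ℝ E / 2) / Gamma s := by
  have h := Measure.integral_comp_smul volume (fun x : E => (1 + ‖x‖ ^ 2 / c) ^ (-s)) √c
  have hscale : ∀ x : E, ‖√c • x‖ ^ 2 / c = ‖x‖ ^ 2 := fun x => by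
    rw [norm_smul, mul_pow, norm_of_nonneg (sqrt_nonneg c), sq_sqrt hc.le]
    field_simp
  have hsqrt_pow : √c ^ finrank ℝ E = c ^ ((finrank ℝ E : ℝ) / 2) := by
    rw [sqrt_eq_rpow, ← rpow_natCast, ← rpow_mul hc.le]
    ring_nf
  simp only [hscale, integral_one_add_norm_sq_rpow_neg hs, hsqrt_pow, smul_eq_mul] at h
  rw [abs_of_pos (by positivity), eq_inv_mul_iff_mul_eq₀ (by positivity)] at h
  rw [← h, mul_rpow pi_pos.le hc.le]
  ring

end InnerProductSpace

theorem integral_dotProduct_self_eq_integral_norm_sq {ι F : Type*} [Fintype ι]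
    [NormedAddCommGroup F] [NormedSpace ℝ F] (g : ℝ → F) :
    ∫ z : ι → ℝ, g (z ⬝ᵥ z) = ∫ x : EuclideanSpace ℝ ι, g (‖x‖ ^ 2) := by
  rw [← (EuclideanSpace.volume_preserving_symm_measurableEquiv_toLp ι).integral_comp']
  congr 1 with x
  rw [EuclideanSpace.norm_sq_eq]
  simp [dotProduct, sq]

section QuadraticForm

open scoped MatrixOrder

variable {ι F : Type*} [Fintype ι] [DecidableEq ι] [NormedAddCommGroup F] [NormedSpace ℝ F]
  {A : Matrix ι ι ℝ}

theorem Matrix.PosSemidef.dotProduct_mulVec_eq_sqrt (hA : A.PosSemidef) (z : ι → ℝ) :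
    z ⬝ᵥ (A *ᵥ z) = (CFC.sqrt A *ᵥ z) ⬝ᵥ (CFC.sqrt A *ᵥ z) := by
  have hsymm : (CFC.sqrt A)ᵀ = CFC.sqrt A := by
    simpa [IsHermitian, conjTranspose_eq_transpose_of_trivial] using
      (CFC.sqrt_nonneg A).posSemidef.isHermitian
  calc z ⬝ᵥ (A *ᵥ z) = z ⬝ᵥ (CFC.sqrt A *ᵥ (CFC.sqrt A *ᵥ z)) := by
        rw [mulVec_mulVec, CFC.sqrt_mul_sqrt_self A hA.nonneg]
    _ = (CFC.sqrt A *ᵥ z) ⬝ᵥ (CFC.sqrt A *ᵥ z) := by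
        rw [dotProduct_mulVec, ← mulVec_transpose, hsymm]

theorem Matrix.PosSemidef.det_sqrt_sq (hA : A.PosSemidef) : (CFC.sqrt A).det ^ 2 = A.det := by
  rw [sq, ← det_mul, CFC.sqrt_mul_sqrt_self A hA.nonneg]

theorem Matrix.PosDef.integral_dotProduct_mulVec (hA : A.PosDef) (g : ℝ → F) :
    ∫ z : ι → ℝ, g (z ⬝ᵥ (A *ᵥ z)) = (√A.det)⁻¹ • ∫ z : ι → ℝ, g (z ⬝ᵥ z) := by
  set S := CFC.sqrt A
  have hS_det_sq : S.det ^ 2 = A.det := hA.posSemidef.det_sqrt_sq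
  have hS_det : S.det ≠ 0 := fun h => hA.det_pos.ne' (by rw [← hS_det_sq, h, sq, zero_mul])
  have hS_inj : Function.Injective S.mulVec :=
    mulVec_injective_iff_isUnit.mpr ((isUnit_iff_isUnit_det S).mpr hS_det.isUnit)
  have hS_emb : MeasurableEmbedding (toLin' S) :=
    (LinearMap.isClosedEmbedding_of_injective
      (LinearMap.ker_eq_bot.mpr hS_inj)).measurableEmbedding
  calc ∫ z : ι → ℝ, g (z ⬝ᵥ (A *ᵥ z))
      = ∫ z : ι → ℝ, g (toLin' S z ⬝ᵥ toLin' S z) := by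
        simp only [toLin'_apply, hA.posSemidef.dotProduct_mulVec_eq_sqrt, S]
    _ = ∫ w, g (w ⬝ᵥ w) ∂(Measure.map (toLin' S) volume) :=
        (hS_emb.integral_map (fun w => g (w ⬝ᵥ w))).symm
    _ = (√A.det)⁻¹ • ∫ z : ι → ℝ, g (z ⬝ᵥ z) := by
        rw [Real.map_matrix_volume_pi_eq_smul_volume_pi hS_det, integral_smul_measure,
          ENNReal.toReal_ofReal (abs_nonneg _), abs_inv, ← hS_det_sq, sqrt_sq_eq_abs]

end QuadraticForm

theorem integral_rpow_one_add_le_mul_integral {α : Type*} [MeasurableSpace α] {m : Measure α}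
    {f : α → ℝ} {M β : ℝ} (hf : Integrable f m) (hf0 : ∀ x, 0 ≤ f x) (hfM : ∀ x, f x ≤ M)
    (hβ : 0 ≤ β) : ∫ x, f x ^ (1 + β) ∂m ≤ M ^ β * ∫ x, f x ∂m := by
  rw [← integral_const_mul]
  refine integral_mono_of_nonneg (.of_forall fun x => rpow_nonneg (hf0 x) _) (hf.const_mul _)
    (.of_forall fun x => ?_)
  dsimp only
  rw [add_comm, rpow_add' (hf0 x) (by linarith), rpow_one]
  exact mul_le_mul_of_nonneg_right (rpow_le_rpow (hf0 x) (hfM x) hβ) (hf0 x)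

section mvtDensity

variable {p : ℕ} {ν : ℝ} {μ : Fin p → ℝ} {V : Matrix (Fin p) (Fin p) ℝ}

theorem one_le_one_add_quadratic (hν : 0 < ν) (hV : V.PosDef) (z : Fin p → ℝ) :
    1 ≤ 1 + (1 / ν) * ((z - μ) ⬝ᵥ (V⁻¹ *ᵥ (z - μ))) := by
  have := hV.inv.posSemidef.dotProduct_mulVec_nonneg (z - μ)
  rw [star_trivial] at this
  have : 0 ≤ (1 / ν) * ((z - μ) ⬝ᵥ (V⁻¹ *ᵥ (z - μ))) := by positivity
  linarith

theorem mvtDensity_self : mvtDensity p ν μ V μ = Gamma ((ν + p) / 2) /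
      (Gamma (ν / 2) * ν ^ ((p : ℝ) / 2) * π ^ ((p : ℝ) / 2) * V.det ^ ((1 : ℝ) / 2)) := by
  simp [mvtDensity]

theorem mvtDensity_self_pos (hν : 0 < ν) (hV : V.PosDef) : 0 < mvtDensity p ν μ V μ := by
  have := hV.det_pos
  rw [mvtDensity_self]
  have : 0 < Gamma (ν / 2) := Gamma_pos_of_pos (by positivity)
  have : 0 < Gamma ((ν + p) / 2) := Gamma_pos_of_pos (by positivity)
  positivity

theorem mvtDensity_nonneg (hν : 0 < ν) (hV : V.PosDef) (z : Fin p → ℝ) :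
    0 ≤ mvtDensity p ν μ V z := by
  have := mvtDensity_self_pos (μ := μ) hν hV
  rw [mvtDensity_self] at this
  have hbase := one_le_one_add_quadratic (μ := μ) hν hV z
  exact mul_nonneg this.le (rpow_nonneg (by linarith) _)

theorem mvtDensity_le_self (hν : 0 < ν) (hV : V.PosDef) (z : Fin p → ℝ) :
    mvtDensity p ν μ V z ≤ mvtDensity p ν μ V μ := by
  have := mvtDensity_self_pos (μ := μ) hν hV
  rw [mvtDensity_self] at this ⊢
  exact mul_le_of_le_one_right this.le (rpow_le_one_of_one_le_of_nonpos
    (one_le_one_add_quadratic hν hV z) (by have : (0 : ℝ) ≤ p := p.cast_nonneg; linarith))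

theorem integral_mvtDensity (hν : 0 < ν) (hV : V.PosDef) :
    ∫ z, mvtDensity p ν μ V z = 1 := by
  set g : ℝ → ℝ := fun t => (1 + t / ν) ^ (-((ν + p) / 2))
  have hdet : 0 < V.det := hV.det_pos
  have hΓ : 0 < Gamma (ν / 2) := Gamma_pos_of_pos (by positivity)
  have hΓ' : 0 < Gamma ((ν + p) / 2) := Gamma_pos_of_pos (by positivity)
  have hkernel : ∫ z, (1 + (1 / ν) * ((z - μ) ⬝ᵥ (V⁻¹ *ᵥ (z - μ)))) ^ (-(ν + p) / 2) =
      √V.det * ((π * ν) ^ ((p : ℝ) / 2) * Gamma (ν / 2) / Gamma ((ν + p) / 2)) := by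
    calc _ = ∫ z, g ((z - μ) ⬝ᵥ (V⁻¹ *ᵥ (z - μ))) := by
          simp only [g, one_div_mul_eq_div, neg_div]
      _ = √V.det * ∫ x : EuclideanSpace ℝ (Fin p), g (‖x‖ ^ 2) := by
        rw [integral_sub_right_eq_self (fun w => g (w ⬝ᵥ (V⁻¹ *ᵥ w))),
          hV.inv.integral_dotProduct_mulVec, integral_dotProduct_self_eq_integral_norm_sq,
          det_nonsing_inv, Ring.inverse_eq_inv', sqrt_inv, inv_inv, smul_eq_mul]
      _ = _ := by
        rw [integral_one_add_norm_sq_div_rpow_neg hν (by simp; linarith),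
          finrank_euclideanSpace_fin]
        ring_nf
  unfold mvtDensity
  rw [integral_const_mul, hkernel, sqrt_eq_rpow, mul_rpow pi_pos.le hν.le]
  field_simp

theorem mvtDensity_self_rpow (hν : 0 < ν) (hV : V.PosDef) (β : ℝ) :
    mvtDensity p ν μ V μ ^ β = (Gamma ((ν + p) / 2) / Gamma (ν / 2)) ^ β *
      ((π * ν) ^ (-(β * p) / 2) * V.det ^ (-β / 2)) := by
  have hdet : 0 < V.det := hV.det_pos
  have hΓ : 0 < Gamma (ν / 2) := Gamma_pos_of_pos (by positivity)
  have hΓ' : 0 < Gamma ((ν + p) / 2) := Gamma_pos_of_pos (by positivity)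
  have hπν : 0 < π * ν := by positivity
  have hself : mvtDensity p ν μ V μ = Gamma ((ν + p) / 2) / Gamma (ν / 2) *
      ((π * ν) ^ (-((p : ℝ) / 2)) * V.det ^ (-(1 : ℝ) / 2)) := by
    rw [mvtDensity_self, neg_div, rpow_neg hπν.le, rpow_neg hdet.le, mul_rpow pi_pos.le hν.le]
    field_simp
  rw [hself, mul_rpow (by positivity) (by positivity), mul_rpow (by positivity) (by positivity),
    ← rpow_mul hπν.le, ← rpow_mul hdet.le]
  ring_nf

end mvtDensity

theorem mvt_power_integral_upper_bound (p : ℕ) (ν β : ℝ) (hν : 0 < ν) (hβ : 0 ≤ β)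
    (μ : Fin p → ℝ) (V : Matrix (Fin p) (Fin p) ℝ) (hV : V.PosDef) :
    (1 / (1 + β)) * ∫ z : Fin p → ℝ, mvtDensity p ν μ V z ^ (1 + β) ≤
      (Real.Gamma ((ν + p) / 2) / Real.Gamma (ν / 2)) ^ β *
        ((1 / (1 + β)) * (π * ν) ^ (-(β * p) / 2) * V.det ^ (-β / 2)) := by
  have hmass := integral_mvtDensity (μ := μ) hν hV
  -- integrability needs no separate proof: a non-integrable function has integral `0`, not `1`
  have hbound := integral_rpow_one_add_le_mul_integral
    (.of_integral_ne_zero (hmass ▸ one_ne_zero)) (mvtDensity_nonneg hν hV)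
    (mvtDensity_le_self hν hV) hβ
  rw [hmass, mul_one, mvtDensity_self_rpow hν hV] at hbound
  calc _ ≤ 1 / (1 + β) * ((Gamma ((ν + p) / 2) / Gamma (ν / 2)) ^ β *
          ((π * ν) ^ (-(β * p) / 2) * V.det ^ (-β / 2))) :=
        mul_le_mul_of_nonneg_left hbound (by positivity)
    _ = _ := by ring
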